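/- For every finite group G and prime p, N^∞_{𝒰_p}(G) equals the intersection of all normal subgroups N of G such that N_{𝒰_p}(G/N) = 1. -/

import Mathlib

universe u

/-- A class of groups (a property of groups) in universe `u`. -/
abbrev GroupClass : Type (u + 1) := ∀ (H : Type u) [Group H], Prop

/-- A (finite) normal chain of `G`: a monotone chain of subgroups running from `⊥`
to `⊤`, all of whose terms are normal in `G`. -/
structure NormalChain (G : Type u) [Group G] : Type u where
  len : ℕ
  ser : Fin (len + 1) → Subgroup G
  mono : Monotone ser
  bot_eq : ser 0 = ⊥
  top_eq : ser (Fin.last len) = ⊤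
  normal : ∀ i, (ser i).Normal

namespace NormalChain

variable {G : Type u} [Group G] (S : NormalChain G)

/-- The order of the `i`-th factor `S.ser i.succ / S.ser i.castSucc` of the chain. -/
noncomputable def factorCard (i : Fin S.len) : ℕ :=
  (S.ser i.castSucc).relIndex (S.ser i.succ)

/-- The `i`-th factor of the chain (realized as the image of `S.ser i.succ` in
`G ⧸ S.ser i.castSucc`) satisfies the group property `P`. -/
def FactorProp (P : GroupClass.{u}) (i : Fin S.len) : Prop :=
  letI := S.normal i.castSucc
  P ↥(Subgroup.map (QuotientGroup.mk' (S.ser i.castSucc)) (S.ser i.succ))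

end NormalChain

/-- A finite group is `p`-nilpotent if it has a normal `p`-complement. -/
def IsPNilpotentGrp (p : ℕ) (G : Type u) [Group G] : Prop :=
  ∃ N : Subgroup G, N.Normal ∧ ¬ p ∣ Nat.card N ∧ ∃ k : ℕ, N.index = p ^ k

/-- A group is supersolvable if it has a normal series with cyclic factors. -/
def IsSupersolvableGrp (G : Type u) [Group G] : Prop :=
  ∃ S : NormalChain G, ∀ i, S.FactorProp (fun H inst => letI := inst; IsCyclic H) i

/-- A group is `p`-solvable if it has a normal series each of whose factors is a
`p`-group or a `p'`-group. -/
def IsPSolvableGrp (p : ℕ) (G : Type u) [Group G] : Prop :=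
  ∃ S : NormalChain G, ∀ i, (∃ k : ℕ, S.factorCard i = p ^ k) ∨ ¬ p ∣ S.factorCard i

/-- `N < M` is a chief factor of `G`: both are normal in `G` and no normal subgroup of
`G` lies strictly between them. -/
def IsChiefFactorOf (G : Type u) [Group G] (N M : Subgroup G) : Prop :=
  N.Normal ∧ M.Normal ∧ N < M ∧
    ∀ K : Subgroup G, K.Normal → N ≤ K → K ≤ M → K = N ∨ K = M

/-- A group is `p`-supersolvable if it is `p`-solvable and all its chief factors of
order divisible by `p` are (cyclic) of order `p`. -/
def IsPSupersolvableGrp (p : ℕ) (G : Type u) [Group G] : Prop :=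
  IsPSolvableGrp p G ∧
    ∀ N M : Subgroup G, IsChiefFactorOf G N M →
      p ∣ N.relIndex M → N.relIndex M = p

/-- The formation of supersolvable groups, as a class of groups. -/
def supersolvableClass : GroupClass.{u} := fun H inst => @IsSupersolvableGrp H inst

/-- The formation of `p`-supersolvable groups, as a class of groups. -/
def pSupersolvableClass (p : ℕ) : GroupClass.{u} := fun H inst => @IsPSupersolvableGrp p H inst

/-- `N` is normal in `G` with `G ⧸ N` in the class `C`. -/
def QuotientInClass (C : GroupClass.{u}) {G : Type u} [Group G] (N : Subgroup G) : Prop :=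
  ∃ _h : N.Normal, letI := _h; C (G ⧸ N)

/-- The `C`-residual `G^C` of `G`: the intersection of all normal subgroups of `G`
whose quotient lies in `C`. -/
def groupResidual (C : GroupClass.{u}) (G : Type u) [Group G] : Subgroup G :=
  sInf {N : Subgroup G | QuotientInClass C N}

/-- The `C`-residual `T^C` of a subgroup `T` of `G`, viewed as a subgroup of `G`. -/
def residualIn (C : GroupClass.{u}) {G : Type u} [Group G] (T : Subgroup G) : Subgroup G :=
  Subgroup.map T.subtype (groupResidual C ↥T)

/-- The weak norm `N_C(G, H) = ⋂_{T ≤ H} N_G(T^C)` of `H` in `G` with respect to `C`. -/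
def weakNorm (C : GroupClass.{u}) {G : Type u} [Group G] (H : Subgroup G) : Subgroup G :=
  ⨅ (T : Subgroup G) (_ : T ≤ H), Subgroup.normalizer (residualIn C T : Set G)

/-- The norm `N_C(G) = N_C(G, G)` of `G` with respect to `C`. -/
def grpNorm (C : GroupClass.{u}) (G : Type u) [Group G] : Subgroup G :=
  weakNorm C (⊤ : Subgroup G)

/-- `s` is the upper `C`-norm series of `G`: `s 0 = ⊥` and
`s (i+1) / s i = N_C(G / s i)`. -/
def IsUpperNormSeries (C : GroupClass.{u}) (G : Type u) [Group G]
    (s : ℕ → Subgroup G) : Prop :=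
  s 0 = ⊥ ∧ ∀ i : ℕ, ∃ h : (s i).Normal,
    s (i + 1) =
      (letI := h; Subgroup.comap (QuotientGroup.mk' (s i)) (grpNorm C (G ⧸ s i)))

/-- The hypercenter of a group: the terminal term of the upper central series. -/
def hyperCenter (G : Type u) [Group G] : Subgroup G :=
  ⨆ n : ℕ, upperCentralSeries G n

/-- The `p`-Fitting length of `G`: the length of a shortest normal chain of `G`
all of whose factors are `p`-nilpotent. -/
noncomputable def pFittingLength (p : ℕ) (G : Type u) [Group G] : ℕ :=
  sInf {n : ℕ | ∃ S : NormalChain G, S.len = n ∧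
    ∀ i, S.FactorProp (fun H inst => @IsPNilpotentGrp p H inst) i}

/-- The Fitting length of `G`: the length of a shortest normal chain of `G`
all of whose factors are nilpotent. -/
noncomputable def fittingLength (G : Type u) [Group G] : ℕ :=
  sInf {n : ℕ | ∃ S : NormalChain G, S.len = n ∧
    ∀ i, S.FactorProp (fun H inst => @Group.IsNilpotent H inst) i}

/-- The `p`-length of `G`: the least number of `p`-factors in a normal chain of `G`
each of whose factors is a `p`-group or a `p'`-group. -/
noncomputable def pLength (p : ℕ) (G : Type u) [Group G] : ℕ :=
  sInf {n : ℕ | ∃ S : NormalChain G,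
    (∀ i, (∃ k : ℕ, S.factorCard i = p ^ k) ∨ ¬ p ∣ S.factorCard i) ∧
    Nat.card {i : Fin S.len // p ∣ S.factorCard i} ≤ n}

/-!
Since `𝒰_p` is a formation, residuals commute with surjective homomorphisms, `f(T^𝒰_p) =
f(T)^𝒰_p`, so a surjection `G → H` maps `N_𝒰_p(G)` into `N_𝒰_p(H)`. Applied to `G / s i → G / N`
this shows inductively that every term of the upper series lies in each `N` with `N_𝒰_p(G/N) = 1`;
conversely the terminal term is such an `N`, because `s (n+1) = s n` says `N_𝒰_p(G / s n) = 1`.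

That `𝒰_p` is a formation comes down to subdirect products `G ≤ A × B`: a `p`-solvable series of
`G` is glued from the pull-back of one of `A` and the trace on `ker (G → A)` of one of `B`, and a
chief factor of `G` is either avoided by `ker (G → A)`, and then isomorphic to a chief factor of
`A`, or covered by it, and then isomorphic to a chief factor inside `ker (G → A)`, which
`ker (G → B)` avoids, hence to a chief factor of `B`.
-/

open Subgroup

def IsPPowerOrPrimeTo (p n : ℕ) : Prop :=
  (∃ k : ℕ, n = p ^ k) ∨ ¬ p ∣ n

lemma IsPPowerOrPrimeTo.of_dvd {p a b : ℕ} (hp : p.Prime) (hab : a ∣ b)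
    (hb : IsPPowerOrPrimeTo p b) : IsPPowerOrPrimeTo p a := by
  rcases hb with ⟨k, rfl⟩ | hb
  · obtain ⟨j, -, rfl⟩ := (Nat.dvd_prime_pow hp).mp hab
    exact Or.inl ⟨j, rfl⟩
  · exact Or.inr fun hpa => hb (hpa.trans hab)

namespace Subgroup

variable {G A B : Type u} [Group G] [Group A] [Group B]

lemma relIndex_map_map_dvd (f : A →* B) (H K : Subgroup A) :
    (H.map f).relIndex (K.map f) ∣ H.relIndex K := by
  rw [← relIndex_comap]
  exact relIndex_dvd_of_le_left K (le_comap_map f H)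

lemma relIndex_inf_inf_dvd {H K : Subgroup G} [H.Normal] (N : Subgroup G) (hHK : H ≤ K) :
    (N ⊓ H).relIndex (N ⊓ K) ∣ H.relIndex K := by
  have hNH : N ⊓ H = H ⊓ (N ⊓ K) := by
    rw [inf_comm H, inf_assoc, inf_eq_right.mpr hHK]
  rw [hNH, inf_relIndex_right, ← relIndex_sup_right]
  exact Dvd.intro _ (relIndex_mul_relIndex _ _ _ le_sup_right (sup_le inf_le_right hHK))

lemma sup_inf_assoc_of_le_of_normal {x y z : Subgroup G} [y.Normal] (hxz : x ≤ z) :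
    (x ⊔ y) ⊓ z = x ⊔ (y ⊓ z) := by
  refine le_antisymm ?_ (sup_le (le_inf le_sup_left hxz) (inf_le_inf_right z le_sup_right))
  rintro g ⟨hg, hgz⟩
  have hg : g ∈ ((x ⊔ y : Subgroup G) : Set G) := hg
  rw [mul_normal] at hg
  obtain ⟨a, ha, b, hb, rfl⟩ := hg
  exact mul_mem_sup ha ⟨hb, (mul_mem_cancel_left (hxz ha)).mp hgz⟩

lemma relIndex_sup_sup_of_inf_le {L K N : Subgroup G} [L.Normal] [N.Normal] (hLK : L ≤ K)
    (hKN : K ⊓ N ≤ L) : (L ⊔ N).relIndex (K ⊔ N) = L.relIndex K := by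
  have hKLN : K ⊔ N = K ⊔ (L ⊔ N) := by rw [← sup_assoc, sup_eq_left.mpr hLK]
  rw [hKLN, relIndex_sup_right, ← inf_relIndex_right, sup_inf_assoc_of_le_of_normal hLK,
    inf_comm, sup_eq_left.mpr hKN]

end Subgroup

def IsPSolvableStep {G : Type u} [Group G] (p : ℕ) (H K : Subgroup G) : Prop :=
  H ≤ K ∧ H.Normal ∧ IsPPowerOrPrimeTo p (H.relIndex K)

def pSolvableStepRel (p : ℕ) (G : Type u) [Group G] : SetRel (Subgroup G) (Subgroup G) :=
  {x | IsPSolvableStep p x.1 x.2}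

section PSolvable

variable {G A B : Type u} [Group G] [Group A] [Group B] {p : ℕ}

lemma IsPSolvableStep.comap {f : A →* B} (hf : Function.Surjective f) {H K : Subgroup B}
    (h : IsPSolvableStep p H K) : IsPSolvableStep p (H.comap f) (K.comap f) := by
  obtain ⟨hHK, hH, hpHK⟩ := h
  refine ⟨comap_mono hHK, hH.comap f, ?_⟩
  rwa [relIndex_comap, map_comap_eq_self_of_surjective hf]

lemma IsPSolvableStep.map (hp : p.Prime) {f : A →* B} (hf : Function.Surjective f)
    {H K : Subgroup A} (h : IsPSolvableStep p H K) :
    IsPSolvableStep p (H.map f) (K.map f) :=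
  ⟨map_mono h.1, h.2.1.map f hf, h.2.2.of_dvd hp (relIndex_map_map_dvd f H K)⟩

lemma IsPSolvableStep.inf_left (hp : p.Prime) (N : Subgroup G) [N.Normal] {H K : Subgroup G}
    (h : IsPSolvableStep p H K) : IsPSolvableStep p (N ⊓ H) (N ⊓ K) := by
  obtain ⟨hHK, hH, hpHK⟩ := h
  exact ⟨inf_le_inf_left N hHK, normal_inf_normal N H,
    hpHK.of_dvd hp (relIndex_inf_inf_dvd N hHK)⟩

lemma isPSolvableGrp_iff_exists_relSeries :
    IsPSolvableGrp p G ↔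
      ∃ s : RelSeries (pSolvableStepRel p G), s.head = ⊥ ∧ s.last = ⊤ := by
  constructor
  · rintro ⟨S, hS⟩
    exact ⟨⟨S.len, S.ser, fun i => ⟨S.mono i.castSucc_le_succ, S.normal _, hS i⟩⟩,
      S.bot_eq, S.top_eq⟩
  · rintro ⟨s, hhead, hlast⟩
    have hnormal_last : s.last.Normal := hlast ▸ normal_top
    exact ⟨⟨s.length, s, Fin.monotone_iff_le_succ.mpr fun i => (s.step i).1, hhead, hlast,
      Fin.lastCases hnormal_last fun i => (s.step i).2.1⟩, fun i => (s.step i).2.2⟩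

lemma IsPSolvableGrp.of_surjective (hp : p.Prime) {f : A →* B} (hf : Function.Surjective f)
    (h : IsPSolvableGrp p A) : IsPSolvableGrp p B := by
  obtain ⟨s, hhead, hlast⟩ := isPSolvableGrp_iff_exists_relSeries.mp h
  exact isPSolvableGrp_iff_exists_relSeries.mpr
    ⟨s.map ⟨Subgroup.map f, fun h => IsPSolvableStep.map hp hf h⟩,
      (congrArg (map f) hhead).trans (map_bot f),
      (congrArg (map f) hlast).trans (map_top_of_surjective f hf)⟩

lemma IsPSolvableGrp.of_ker_inf_eq_bot (hp : p.Prime) {f₁ : G →* A} {f₂ : G →* B}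
    (hf₁ : Function.Surjective f₁) (hf₂ : Function.Surjective f₂) (hker : f₁.ker ⊓ f₂.ker = ⊥)
    (h₁ : IsPSolvableGrp p A) (h₂ : IsPSolvableGrp p B) : IsPSolvableGrp p G := by
  obtain ⟨s₁, hhead₁, hlast₁⟩ := isPSolvableGrp_iff_exists_relSeries.mp h₁
  obtain ⟨s₂, hhead₂, hlast₂⟩ := isPSolvableGrp_iff_exists_relSeries.mp h₂
  let lower : RelSeries (pSolvableStepRel p G) :=
    s₂.map ⟨fun H => f₁.ker ⊓ H.comap f₂, fun h => (IsPSolvableStep.comap hf₂ h).inf_left hp _⟩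
  let upper : RelSeries (pSolvableStepRel p G) :=
    s₁.map ⟨Subgroup.comap f₁, fun h => IsPSolvableStep.comap hf₁ h⟩
  have hjoin : lower.last = upper.head := by
    change f₁.ker ⊓ s₂.last.comap f₂ = s₁.head.comap f₁
    rw [hlast₂, hhead₁, comap_top, inf_top_eq, MonoidHom.comap_bot]
  refine isPSolvableGrp_iff_exists_relSeries.mpr ⟨lower.smash upper hjoin, ?_, ?_⟩
  · rw [RelSeries.head_smash]
    change f₁.ker ⊓ s₂.head.comap f₂ = ⊥
    rw [hhead₂, MonoidHom.comap_bot, hker]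
  · rw [RelSeries.last_smash]
    change s₁.last.comap f₁ = ⊤
    rw [hlast₁, comap_top]

end PSolvable

section ChiefFactor

variable {G A B : Type u} [Group G] [Group A] [Group B]

lemma isChiefFactorOf_comap_iff {f : A →* B} (hf : Function.Surjective f) {N M : Subgroup B} :
    IsChiefFactorOf A (N.comap f) (M.comap f) ↔ IsChiefFactorOf B N M := by
  have hnormal : ∀ {H : Subgroup B}, (H.comap f).Normal ↔ H.Normal := fun {H} =>
    ⟨fun h => map_comap_eq_self_of_surjective hf H ▸ h.map f hf, fun h => h.comap f⟩
  constructor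
  · rintro ⟨hN, hM, hlt, hmax⟩
    refine ⟨hnormal.mp hN, hnormal.mp hM, (comap_lt_comap_of_surjective hf).mp hlt,
      fun K hK hNK hKM => ?_⟩
    simpa only [(comap_injective hf).eq_iff] using
      hmax _ (hK.comap f) (comap_mono hNK) (comap_mono hKM)
  · rintro ⟨hN, hM, hlt, hmax⟩
    refine ⟨hN.comap f, hM.comap f, (comap_lt_comap_of_surjective hf).mpr hlt,
      fun K hK hNK hKM => ?_⟩
    have hker : f.ker ≤ K :=
      ((MonoidHom.comap_bot f).symm.trans_le (comap_mono bot_le)).trans hNK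
    rw [← comap_map_eq_self hker]
    refine (hmax _ (hK.map f hf) ?_ ?_).imp (congrArg _) (congrArg _)
    · simpa only [map_comap_eq_self_of_surjective hf] using map_mono (f := f) hNK
    · simpa only [map_comap_eq_self_of_surjective hf] using map_mono (f := f) hKM

lemma IsChiefFactorOf.inf_le_or_le_sup {L K : Subgroup G} (h : IsChiefFactorOf G L K)
    (N : Subgroup G) [N.Normal] : K ⊓ N ≤ L ∨ K ≤ L ⊔ N := by
  obtain ⟨hL, hK, hLK, hmax⟩ := h
  rcases hmax (K ⊓ (L ⊔ N)) (normal_inf_normal _ _) (le_inf hLK.le le_sup_left) inf_le_left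
    with h | h
  · exact Or.inl (h ▸ inf_le_inf_left K le_sup_right)
  · exact Or.inr (inf_eq_left.mp h)

/-- When `K ⊓ N ≤ L ≤ K`, the maps `X ↦ X ⊔ N` and `Y ↦ Y ⊓ K` are inverse lattice isomorphisms
between `[L, K]` and `[L ⊔ N, K ⊔ N]` preserving normality. -/
lemma isChiefFactorOf_sup_iff {L K N : Subgroup G} [L.Normal] [K.Normal] [N.Normal]
    (hLK : L ≤ K) (hKN : K ⊓ N ≤ L) :
    IsChiefFactorOf G (L ⊔ N) (K ⊔ N) ↔ IsChiefFactorOf G L K := by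
  have hdown : ∀ {X : Subgroup G}, L ≤ X → X ≤ K → (X ⊔ N) ⊓ K = X := fun hLX hXK => by
    rw [sup_inf_assoc_of_le_of_normal hXK, inf_comm, sup_eq_left.mpr (hKN.trans hLX)]
  constructor
  · rintro ⟨-, -, hlt, hmax⟩
    refine ⟨‹_›, ‹_›, lt_of_le_of_ne hLK fun h => hlt.ne (h ▸ rfl), fun X _ hLX hXK => ?_⟩
    rcases hmax (X ⊔ N) (sup_normal _ _) (sup_le_sup_right hLX N) (sup_le_sup_right hXK N)
      with h | h
    · exact Or.inl (by rw [← hdown hLX hXK, h, hdown le_rfl hLK])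
    · exact Or.inr (by rw [← hdown hLX hXK, h, hdown hLK le_rfl])
  · rintro ⟨-, -, hlt, hmax⟩
    refine ⟨sup_normal _ _, sup_normal _ _,
      lt_of_le_of_ne (sup_le_sup_right hLK N) fun h => hlt.ne ?_, fun Y _ hLY hYK => ?_⟩
    · rw [← hdown le_rfl hLK, h, hdown hLK le_rfl]
    · have hup : (Y ⊓ K) ⊔ N = Y := by
        rw [sup_comm, inf_comm, ← sup_inf_assoc_of_le_of_normal (le_sup_right.trans hLY),
          sup_comm, inf_eq_right.mpr hYK]
      rcases hmax (Y ⊓ K) (normal_inf_normal _ _) (le_inf (le_sup_left.trans hLY) hLK)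
        inf_le_right with h | h
      · exact Or.inl (by rw [← hup, h])
      · exact Or.inr (by rw [← hup, h])

lemma IsChiefFactorOf.map_of_inf_ker_le {f : A →* B} (hf : Function.Surjective f)
    {L K : Subgroup A} (h : IsChiefFactorOf A L K) (hK : K ⊓ f.ker ≤ L) :
    IsChiefFactorOf B (L.map f) (K.map f) ∧ (L.map f).relIndex (K.map f) = L.relIndex K := by
  have := h.1
  have := h.2.1
  have hLK : L ≤ K := h.2.2.1.le
  refine ⟨?_, ?_⟩
  · rw [← isChiefFactorOf_comap_iff hf, comap_map_eq, comap_map_eq,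
      isChiefFactorOf_sup_iff hLK hK]
    exact h
  · rw [relIndex_map_map, relIndex_sup_sup_of_inf_le hLK hK]

lemma IsChiefFactorOf.inf_of_le_sup {L K : Subgroup G} (h : IsChiefFactorOf G L K)
    {N : Subgroup G} [N.Normal] (hK : K ≤ L ⊔ N) :
    IsChiefFactorOf G (L ⊓ N) (K ⊓ N) ∧ (L ⊓ N).relIndex (K ⊓ N) = L.relIndex K := by
  have := h.1
  have := h.2.1
  have hLK : L ≤ K := h.2.2.1.le
  have hKN : K ⊓ N ⊓ L ≤ L ⊓ N := by
    rw [inf_comm, ← inf_assoc, inf_eq_left.mpr hLK]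
  have hL : L ⊓ N ⊔ L = L := sup_eq_right.mpr inf_le_left
  have hK' : K ⊓ N ⊔ L = K := by
    rw [sup_comm, inf_comm, ← sup_inf_assoc_of_le_of_normal hLK, inf_eq_right.mpr hK]
  have hmono : L ⊓ N ≤ K ⊓ N := inf_le_inf_right N hLK
  refine ⟨?_, ?_⟩
  · rw [← isChiefFactorOf_sup_iff hmono hKN, hL, hK']
    exact h
  · rw [← relIndex_sup_sup_of_inf_le hmono hKN, hL, hK']

end ChiefFactor

section PSupersolvable

variable {G A B : Type u} [Group G] [Group A] [Group B] {p : ℕ}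

lemma IsPSupersolvableGrp.of_subsingleton [Subsingleton G] : IsPSupersolvableGrp p G := by
  refine ⟨⟨⟨0, fun _ => ⊥, monotone_const, rfl, Subsingleton.elim _ _, fun _ => normal_bot⟩,
    fun i => i.elim0⟩, fun N M h _ => ?_⟩
  exact absurd (Subsingleton.elim N M) h.2.2.1.ne

lemma IsPSupersolvableGrp.of_surjective (hp : p.Prime) {f : A →* B} (hf : Function.Surjective f)
    (h : IsPSupersolvableGrp p A) : IsPSupersolvableGrp p B := by
  refine ⟨h.1.of_surjective hp hf, fun N M hNM hdvd => ?_⟩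
  rw [← isChiefFactorOf_comap_iff hf] at hNM
  have hindex : (N.comap f).relIndex (M.comap f) = N.relIndex M := by
    rw [relIndex_comap, map_comap_eq_self_of_surjective hf]
  rw [← hindex] at hdvd ⊢
  exact h.2 _ _ hNM hdvd

lemma IsPSupersolvableGrp.of_ker_inf_eq_bot (hp : p.Prime) {f₁ : G →* A} {f₂ : G →* B}
    (hf₁ : Function.Surjective f₁) (hf₂ : Function.Surjective f₂) (hker : f₁.ker ⊓ f₂.ker = ⊥)
    (h₁ : IsPSupersolvableGrp p A) (h₂ : IsPSupersolvableGrp p B) :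
    IsPSupersolvableGrp p G := by
  refine ⟨h₁.1.of_ker_inf_eq_bot hp hf₁ hf₂ hker h₂.1, fun L K hLK hdvd => ?_⟩
  rcases hLK.inf_le_or_le_sup f₁.ker with hK | hK
  · obtain ⟨hchief, hindex⟩ := hLK.map_of_inf_ker_le hf₁ hK
    rw [← hindex] at hdvd ⊢
    exact h₁.2 _ _ hchief hdvd
  · obtain ⟨hchief, hindex⟩ := hLK.inf_of_le_sup hK
    have hK₂ : K ⊓ f₁.ker ⊓ f₂.ker ≤ L ⊓ f₁.ker := by
      rw [inf_assoc, hker, inf_bot_eq]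
      exact bot_le
    obtain ⟨hchief₂, hindex₂⟩ := hchief.map_of_inf_ker_le hf₂ hK₂
    rw [← hindex, ← hindex₂] at hdvd ⊢
    exact h₂.2 _ _ hchief₂ hdvd

end PSupersolvable

/-- A formation containing the trivial group; `of_subsingleton` only rules out the empty class,
for which `G / G^C` (with `G^C = G`) would not lie in `C`. -/
structure IsFormation (C : GroupClass.{u}) : Prop where
  of_subsingleton : ∀ (H : Type u) [Group H] [Subsingleton H], C H
  of_surjective : ∀ {A B : Type u} [Group A] [Group B] (f : A →* B), Function.Surjective f →
    C A → C B
  quotient_inf : ∀ {G : Type u} [Group G] (N₁ N₂ : Subgroup G) [N₁.Normal] [N₂.Normal],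
    C (G ⧸ N₁) → C (G ⧸ N₂) → C (G ⧸ (N₁ ⊓ N₂))

theorem pSupersolvableClass_isFormation {p : ℕ} (hp : p.Prime) :
    IsFormation (pSupersolvableClass.{u} p) where
  of_subsingleton _ _ _ := IsPSupersolvableGrp.of_subsingleton
  of_surjective _ hf h := IsPSupersolvableGrp.of_surjective hp hf h
  quotient_inf {G} _ N₁ N₂ _ _ h₁ h₂ := by
    let q₁ := QuotientGroup.map (N₁ ⊓ N₂) N₁ (MonoidHom.id G) fun _ hx => hx.1
    let q₂ := QuotientGroup.map (N₁ ⊓ N₂) N₂ (MonoidHom.id G) fun _ hx => hx.2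
    have hker : q₁.ker ⊓ q₂.ker = ⊥ := by
      refine eq_bot_iff.mpr fun x hx => ?_
      induction x using QuotientGroup.induction_on with | H g => ?_
      exact (QuotientGroup.eq_one_iff g).mpr
        ⟨(QuotientGroup.eq_one_iff g).mp hx.1, (QuotientGroup.eq_one_iff g).mp hx.2⟩
    exact IsPSupersolvableGrp.of_ker_inf_eq_bot hp
      (QuotientGroup.map_surjective_of_surjective _ _ _ QuotientGroup.mk_surjective _)
      (QuotientGroup.map_surjective_of_surjective _ _ _ QuotientGroup.mk_surjective _) hker h₁ h₂

namespace IsFormation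

variable {C : GroupClass.{u}} {G A B : Type u} [Group G] [Group A] [Group B]

lemma quotientInClass_comap (hC : IsFormation C) {f : A →* B} (hf : Function.Surjective f)
    {N : Subgroup B} (h : QuotientInClass C N) : QuotientInClass C (N.comap f) := by
  obtain ⟨hN, hCN⟩ := h
  have hker : ((QuotientGroup.mk' N).comp f).ker = N.comap f := by
    rw [← MonoidHom.comap_ker, QuotientGroup.ker_mk']
  let e : A ⧸ N.comap f ≃* B ⧸ N := (QuotientGroup.quotientMulEquivOfEq hker.symm).trans
    (QuotientGroup.quotientKerEquivOfSurjective _ ((QuotientGroup.mk'_surjective N).comp hf))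
  exact ⟨hN.comap f, hC.of_surjective e.symm.toMonoidHom e.symm.surjective hCN⟩

lemma quotientInClass_map (hC : IsFormation C) {f : A →* B} (hf : Function.Surjective f)
    {N : Subgroup A} (h : QuotientInClass C N) : QuotientInClass C (N.map f) := by
  obtain ⟨hN, hCN⟩ := h
  have := hN.map f hf
  exact ⟨this, hC.of_surjective (QuotientGroup.map N (N.map f) f (le_comap_map f N))
    (QuotientGroup.map_surjective_of_surjective _ _ _ (QuotientGroup.mk_surjective.comp hf) _)
    hCN⟩

lemma quotientInClass_groupResidual (hC : IsFormation C) [Finite G] :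
    QuotientInClass C (groupResidual C G) := by
  have hinf : InfClosed {N : Subgroup G | QuotientInClass C N} := by
    rintro N₁ ⟨hN₁, hC₁⟩ N₂ ⟨hN₂, hC₂⟩
    exact ⟨normal_inf_normal N₁ N₂, hC.quotient_inf N₁ N₂ hC₁ hC₂⟩
  have htop : QuotientInClass C (⊤ : Subgroup G) :=
    ⟨normal_top, @hC.of_subsingleton _ _ QuotientGroup.subsingleton_quotient_top⟩
  exact hinf.sInf_mem (Set.toFinite _) htop le_rfl

lemma map_groupResidual (hC : IsFormation C) [Finite A] {f : A →* B}
    (hf : Function.Surjective f) : (groupResidual C A).map f = groupResidual C B :=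
  le_antisymm
    (le_sInf fun _ hN => map_le_iff_le_comap.mpr (sInf_le (hC.quotientInClass_comap hf hN)))
    (sInf_le (hC.quotientInClass_map hf hC.quotientInClass_groupResidual))

lemma map_residualIn (hC : IsFormation C) [Finite A] (f : A →* B) (T : Subgroup A) :
    (residualIn C T).map f = residualIn C (T.map f) := by
  rw [residualIn, residualIn, map_map,
    ← hC.map_groupResidual (f.subgroupMap_surjective T), map_map]
  rfl

lemma map_grpNorm_le (hC : IsFormation C) [Finite A] {f : A →* B}
    (hf : Function.Surjective f) : (grpNorm C A).map f ≤ grpNorm C B := by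
  have hA : ∀ T : Subgroup A, grpNorm C A ≤ normalizer (residualIn C T : Set A) := fun T => by
    rw [grpNorm, weakNorm]
    exact iInf₂_le T le_top
  show _ ≤ weakNorm C (⊤ : Subgroup B)
  refine le_iInf₂ fun S _ => ?_
  have hnorm := le_normalizer_map (H := residualIn C (S.comap f)) f
  rw [hC.map_residualIn, map_comap_eq_self_of_surjective hf] at hnorm
  exact (map_mono (hA _)).trans hnorm

lemma upperNormSeries_le (hC : IsFormation C) [Finite G] {s : ℕ → Subgroup G}
    (hs : IsUpperNormSeries C G s) {N : Subgroup G} [N.Normal] (hN : grpNorm C (G ⧸ N) = ⊥)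
    (i : ℕ) : s i ≤ N := by
  induction i with
  | zero => exact hs.1 ▸ bot_le
  | succ i ih =>
    obtain ⟨_, hsucc⟩ := hs.2 i
    let q := QuotientGroup.map (s i) N (MonoidHom.id G) ih
    have hq : q.comp (QuotientGroup.mk' (s i)) = QuotientGroup.mk' N := rfl
    calc s (i + 1) = (grpNorm C (G ⧸ s i)).comap (QuotientGroup.mk' (s i)) := hsucc
      _ ≤ ((⊥ : Subgroup (G ⧸ N)).comap q).comap (QuotientGroup.mk' (s i)) :=
        comap_mono (map_le_iff_le_comap.mp (hN ▸ hC.map_grpNorm_le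
          (QuotientGroup.map_surjective_of_surjective _ _ _ QuotientGroup.mk_surjective _)))
      _ = N := by rw [comap_comap, hq, MonoidHom.comap_bot, QuotientGroup.ker_mk']

end IsFormation

lemma IsUpperNormSeries.grpNorm_quotient_eq_bot {C : GroupClass.{u}} {G : Type u} [Group G]
    {s : ℕ → Subgroup G} (hs : IsUpperNormSeries C G s) {n : ℕ} (hstab : s (n + 1) = s n) :
    ∃ h : (s n).Normal, (letI := h; grpNorm C (G ⧸ s n) = ⊥) := by
  obtain ⟨_, hsucc⟩ := hs.2 n
  refine ⟨‹_›, comap_injective (QuotientGroup.mk'_surjective (s n)) ?_⟩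
  rw [← hsucc, hstab, MonoidHom.comap_bot, QuotientGroup.ker_mk']

/-- For every finite group `G` and prime `p`, the terminal term
`N^∞_{𝒰_p}(G)` of the upper `𝒰_p`-norm series equals the intersection of all normal
subgroups `N` of `G` such that `N_{𝒰_p}(G/N) = 1`. -/
theorem terminal_upperNormSeries_eq_sInf
    {G : Type u} [Group G] [Finite G] {p : ℕ} (hp : p.Prime)
    (s : ℕ → Subgroup G) (hs : IsUpperNormSeries (pSupersolvableClass p) G s)
    (n : ℕ) (hstab : ∀ m : ℕ, n ≤ m → s m = s n) :
    s n = sInf {N : Subgroup G | ∃ h : N.Normal,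
      (letI := h; grpNorm (pSupersolvableClass p) (G ⧸ N) = ⊥)} :=
  le_antisymm
    (le_sInf fun _ ⟨_, hN⟩ => (pSupersolvableClass_isFormation hp).upperNormSeries_le hs hN n)
    (sInf_le (hs.grpNorm_quotient_eq_bot (hstab (n + 1) n.le_succ)))
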